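/- arXiv:2312.12753 — 2 statements merged into one kernel-verified Lean document; each statement's English description precedes it below -/
import Mathlib

section
/- Let p be a prime, h ≥ 2, and let n_1,…,n_{h-1} be positive integers. Let b_1 < b_2 < … < b_{h-1} be positive integers each coprime to p. Suppose for each i = 2,…,h-1 there exist nonnegative integers ν_{i,0}, ν_{i,1},…,ν_{i,i-1} with ν_{i,j} < p^{n_j} for j = 1,…,i-1 satisfying b_i = ν_{i,0}·p^{n_1+…+n_{i-1}} + ν_{i,1}·p^{n_2+…+n_{i-1}}·b_1 + … + ν_{i,i-1}·b_{i-1}. Then the following are equivalent: (1) for every i = 2,…,h-1, p^{n_1+…+n_{i-1}} divides b_i − b_{i-1}; (2) for every i = 2,…,h-1, ν_{i,i-1} = 1 and ν_{i,j} = 0 for all j = 1,…,i-2. -/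
lemma lemA (p : ℕ) (hp : p.Prime) (n b c : ℕ → ℕ) :
    ∀ k, (∀ j, 1 ≤ j → j ≤ k → c j < p ^ n j) →
    (∀ j, 1 ≤ j → j ≤ k → Nat.Coprime (b j) p) →
    (p ^ (∑ t ∈ Finset.Icc 1 k, n t) ∣
      ∑ j ∈ Finset.Icc 1 k, c j * p ^ (∑ t ∈ Finset.Icc (j+1) k, n t) * b j) →
    ∀ j, 1 ≤ j → j ≤ k → c j = 0 := by
  intro k
  induction k with
  | zero => intro _ _ _ j hj1 hj0; omega
  | succ k ih =>
    intro hbd hcop hdvd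
    have hsplit : ∑ j ∈ Finset.Icc 1 (k+1),
        c j * p ^ (∑ t ∈ Finset.Icc (j+1) (k+1), n t) * b j
        = p ^ n (k+1) * (∑ j ∈ Finset.Icc 1 k,
            c j * p ^ (∑ t ∈ Finset.Icc (j+1) k, n t) * b j) + c (k+1) * b (k+1) := by
      rw [Finset.sum_Icc_succ_top (by omega)]
      have h0 : (∑ t ∈ Finset.Icc (k+1+1) (k+1), n t) = 0 := by
        rw [Finset.Icc_eq_empty (by omega)]; simp
      rw [h0, Finset.mul_sum]
      simp only [pow_zero, mul_one]
      congr 1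
      apply Finset.sum_congr rfl
      intro j hj
      simp only [Finset.mem_Icc] at hj
      rw [Finset.sum_Icc_succ_top (by omega : j + 1 ≤ k + 1), pow_add]
      ring
    have hNsplit : (∑ t ∈ Finset.Icc 1 (k+1), n t)
        = (∑ t ∈ Finset.Icc 1 k, n t) + n (k+1) :=
      Finset.sum_Icc_succ_top (by omega) n
    rw [hsplit, hNsplit] at hdvd
    have h1 : p ^ n (k+1) ∣ p ^ ((∑ t ∈ Finset.Icc 1 k, n t) + n (k+1)) :=
      pow_dvd_pow _ (by omega)
    have h2 : p ^ n (k+1) ∣ p ^ n (k+1) * (∑ j ∈ Finset.Icc 1 k,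
          c j * p ^ (∑ t ∈ Finset.Icc (j+1) k, n t) * b j) := Dvd.intro _ rfl
    have hd1 : p ^ n (k+1) ∣ c (k+1) * b (k+1) :=
      (Nat.dvd_add_right h2).mp (h1.trans hdvd)
    have hck : c (k+1) = 0 := by
      have hcp : Nat.Coprime (p ^ n (k+1)) (b (k+1)) :=
        Nat.Coprime.pow_left _ ((hcop (k+1) (by omega) le_rfl).symm)
      exact Nat.eq_zero_of_dvd_of_lt (hcp.dvd_of_dvd_mul_right hd1)
        (hbd (k+1) (by omega) le_rfl)
    have hdvd2 : p ^ (∑ t ∈ Finset.Icc 1 k, n t) ∣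
        ∑ j ∈ Finset.Icc 1 k, c j * p ^ (∑ t ∈ Finset.Icc (j+1) k, n t) * b j := by
      rw [hck, zero_mul, add_zero, pow_add, mul_comm (p ^ (∑ t ∈ Finset.Icc 1 k, n t))] at hdvd
      exact (mul_dvd_mul_iff_left (pow_ne_zero _ hp.pos.ne')).mp hdvd
    have hrec := ih (fun j h1 h2 => hbd j h1 (by omega))
      (fun j h1 h2 => hcop j h1 (by omega)) hdvd2
    intro j hj1 hj2
    rcases Nat.lt_or_ge j (k+1) with hlt | hge
    · exact hrec j hj1 (by omega)
    · have : j = k + 1 := by omega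
      rw [this]; exact hck

theorem hasse_arf_combinatorial_core (p h : ℕ) (hp : p.Prime) (hh : 2 ≤ h)
    (n b : ℕ → ℕ) (ν : ℕ → ℕ → ℕ)
    (hn : ∀ j, 1 ≤ j → j ≤ h - 1 → 0 < n j)
    (hb : ∀ i, 1 ≤ i → i ≤ h - 1 → 0 < b i)
    (hmono : ∀ i j, 1 ≤ i → i < j → j ≤ h - 1 → b i < b j)
    (hcop : ∀ i, 1 ≤ i → i ≤ h - 1 → Nat.Coprime (b i) p)
    (hbound : ∀ i j, 2 ≤ i → i ≤ h - 1 → 1 ≤ j → j ≤ i - 1 → ν i j < p ^ n j)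
    (hrel : ∀ i, 2 ≤ i → i ≤ h - 1 →
      b i = ν i 0 * p ^ (∑ t ∈ Finset.Icc 1 (i - 1), n t)
        + ∑ j ∈ Finset.Icc 1 (i - 1),
            ν i j * p ^ (∑ t ∈ Finset.Icc (j + 1) (i - 1), n t) * b j) :
    (∀ i, 2 ≤ i → i ≤ h - 1 →
        (p : ℤ) ^ (∑ t ∈ Finset.Icc 1 (i - 1), n t) ∣ (b i : ℤ) - b (i - 1))
    ↔ (∀ i, 2 ≤ i → i ≤ h - 1 →
        ν i (i - 1) = 1 ∧ ∀ j, 1 ≤ j → j ≤ i - 2 → ν i j = 0) := by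
  constructor
  · intro H i hi2 hih
    obtain ⟨k, rfl⟩ : ∃ k, i = k + 1 := ⟨i - 1, by omega⟩
    have hk1 : 1 ≤ k := by omega
    simp only [Nat.add_sub_cancel]
    set N := ∑ t ∈ Finset.Icc 1 k, n t with hN
    have hrel' := hrel (k+1) hi2 hih
    simp only [Nat.add_sub_cancel] at hrel'
    have hkmem : k ∈ Finset.Icc 1 k := Finset.mem_Icc.mpr ⟨hk1, le_rfl⟩
    have hEk : (∑ t ∈ Finset.Icc (k+1) k, n t) = 0 := by
      rw [Finset.Icc_eq_empty (by omega)]; simp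
    have hsum : ∑ j ∈ Finset.Icc 1 k,
          ν (k+1) j * p ^ (∑ t ∈ Finset.Icc (j+1) k, n t) * b j
        = (∑ j ∈ (Finset.Icc 1 k).erase k,
            ν (k+1) j * p ^ (∑ t ∈ Finset.Icc (j+1) k, n t) * b j)
          + ν (k+1) k * b k := by
      rw [← Finset.sum_erase_add _ _ hkmem, hEk, pow_zero, mul_one]
    have hdvdnk : ∀ j ∈ (Finset.Icc 1 k).erase k,
        (p : ℤ) ^ n k ∣ (ν (k+1) j : ℤ) * (p:ℤ) ^ (∑ t ∈ Finset.Icc (j+1) k, n t) * b j := by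
      intro j hj
      simp only [Finset.mem_erase, Finset.mem_Icc] at hj
      have : n k ≤ ∑ t ∈ Finset.Icc (j+1) k, n t :=
        Finset.single_le_sum (fun t _ => Nat.zero_le _)
          (Finset.mem_Icc.mpr ⟨by omega, le_rfl⟩)
      exact Dvd.dvd.mul_right (Dvd.dvd.mul_left (pow_dvd_pow _ this) _) _
    have hnkN : n k ≤ N := Finset.single_le_sum (fun t _ => Nat.zero_le _) hkmem
    have hHN : (p : ℤ) ^ N ∣ (b (k+1) : ℤ) - b k := by
      have := H (k+1) hi2 hih
      simpa only [Nat.add_sub_cancel] using this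
    have hHk : (p : ℤ) ^ n k ∣ (b (k+1) : ℤ) - b k :=
      dvd_trans (pow_dvd_pow _ hnkN) hHN
    have hcast : (b (k+1) : ℤ) = ν (k+1) 0 * (p:ℤ) ^ N
        + (∑ j ∈ (Finset.Icc 1 k).erase k,
            (ν (k+1) j : ℤ) * (p:ℤ) ^ (∑ t ∈ Finset.Icc (j+1) k, n t) * b j)
        + ν (k+1) k * b k := by
      rw [hsum] at hrel'
      push_cast [hrel']
      ring
    have hdvd3 : (p : ℤ) ^ n k ∣ ((ν (k+1) k : ℤ) - 1) * b k := by
      have e : ((ν (k+1) k : ℤ) - 1) * b k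
          = ((b (k+1) : ℤ) - b k)
            - (ν (k+1) 0 * (p:ℤ) ^ N
              + ∑ j ∈ (Finset.Icc 1 k).erase k,
                (ν (k+1) j : ℤ) * (p:ℤ) ^ (∑ t ∈ Finset.Icc (j+1) k, n t) * b j) := by
        rw [hcast]; ring
      rw [e]
      exact dvd_sub hHk (dvd_add ((pow_dvd_pow (p:ℤ) hnkN).mul_left _)
        (Finset.dvd_sum hdvdnk))
    have hcopZ : IsCoprime ((p:ℤ) ^ n k) ((b k : ℤ)) :=
      ((Nat.isCoprime_iff_coprime.mpr (hcop k hk1 (by omega))).symm).pow_left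
    have hdν : (p:ℤ) ^ n k ∣ (ν (k+1) k : ℤ) - 1 :=
      hcopZ.dvd_of_dvd_mul_right hdvd3
    have hνlt : ν (k+1) k < p ^ n k := hbound (k+1) k hi2 hih hk1 (by omega)
    have hpnk : 2 ≤ p ^ n k := by
      have h1 : 1 < p ^ n k := Nat.one_lt_pow (by have := hn k hk1 (by omega); omega) hp.one_lt
      omega
    have hν1 : ν (k+1) k = 1 := by
      have habs : (ν (k+1) k : ℤ) - 1 = 0 := by
        apply Int.eq_zero_of_abs_lt_dvd hdν
        have h1 : ((p:ℤ) ^ n k) = ((p ^ n k : ℕ) : ℤ) := by push_cast; ring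
        rw [h1, abs_lt]
        constructor <;> omega
      omega
    set c : ℕ → ℕ := fun j => if j = k then 0 else ν (k+1) j with hc
    have hdvdN : (p:ℤ) ^ N ∣ ∑ j ∈ (Finset.Icc 1 k).erase k,
        (ν (k+1) j : ℤ) * (p:ℤ) ^ (∑ t ∈ Finset.Icc (j+1) k, n t) * b j := by
      have e : ∑ j ∈ (Finset.Icc 1 k).erase k,
          (ν (k+1) j : ℤ) * (p:ℤ) ^ (∑ t ∈ Finset.Icc (j+1) k, n t) * b j
          = ((b (k+1) : ℤ) - b k) - ν (k+1) 0 * (p:ℤ) ^ N := by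
        rw [hcast, hν1]; push_cast; ring
      rw [e]
      exact dvd_sub hHN (dvd_rfl.mul_left _)
    have hdvdNat : p ^ N ∣ ∑ j ∈ Finset.Icc 1 k,
        c j * p ^ (∑ t ∈ Finset.Icc (j+1) k, n t) * b j := by
      rw [← Int.natCast_dvd_natCast]
      push_cast
      have e : ∑ j ∈ Finset.Icc 1 k,
          (c j : ℤ) * (p:ℤ) ^ (∑ t ∈ Finset.Icc (j+1) k, n t) * b j
          = ∑ j ∈ (Finset.Icc 1 k).erase k,
            (ν (k+1) j : ℤ) * (p:ℤ) ^ (∑ t ∈ Finset.Icc (j+1) k, n t) * b j := by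
        rw [← Finset.sum_erase_add _ (fun j =>
          (c j : ℤ) * (p:ℤ) ^ (∑ t ∈ Finset.Icc (j+1) k, n t) * b j) hkmem]
        have hck : c k = 0 := by simp [hc]
        rw [hck]
        push_cast
        rw [zero_mul, zero_mul, add_zero]
        apply Finset.sum_congr rfl
        intro j hj
        simp only [Finset.mem_erase] at hj
        simp [hc, hj.1]
      rw [e]
      exact hdvdN
    have hzero := lemA p hp n b c k
      (fun j hj1 hj2 => by
        by_cases hjk : j = k
        · simp only [hc, if_pos hjk]
          exact Nat.pow_pos hp.pos |>.trans_le le_rfl |> fun h => h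
        · simp only [hc, if_neg hjk]
          exact hbound (k+1) j hi2 hih hj1 (by omega))
      (fun j hj1 hj2 => hcop j hj1 (by omega)) hdvdNat
    refine ⟨hν1, fun j hj1 hj2 => ?_⟩
    have hjk : j ≠ k := by omega
    have := hzero j hj1 (by omega)
    simpa [hc, hjk] using this
  · intro H i hi2 hih
    obtain ⟨k, rfl⟩ : ∃ k, i = k + 1 := ⟨i - 1, by omega⟩
    have hk1 : 1 ≤ k := by omega
    simp only [Nat.add_sub_cancel]
    obtain ⟨hν1, hν0⟩ := H (k+1) hi2 hih
    simp only [Nat.add_sub_cancel] at hν1 hν0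
    have hrel' := hrel (k+1) hi2 hih
    simp only [Nat.add_sub_cancel] at hrel'
    have hkmem : k ∈ Finset.Icc 1 k := Finset.mem_Icc.mpr ⟨hk1, le_rfl⟩
    have hEk : (∑ t ∈ Finset.Icc (k+1) k, n t) = 0 := by
      rw [Finset.Icc_eq_empty (by omega)]; simp
    have hsum : ∑ j ∈ Finset.Icc 1 k,
          ν (k+1) j * p ^ (∑ t ∈ Finset.Icc (j+1) k, n t) * b j = b k := by
      rw [← Finset.sum_erase_add _ _ hkmem, hEk, pow_zero, mul_one, hν1, one_mul]
      have : ∑ j ∈ (Finset.Icc 1 k).erase k,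
          ν (k+1) j * p ^ (∑ t ∈ Finset.Icc (j+1) k, n t) * b j = 0 := by
        apply Finset.sum_eq_zero
        intro j hj
        simp only [Finset.mem_erase, Finset.mem_Icc] at hj
        rw [hν0 j hj.2.1 (by omega), zero_mul, zero_mul]
      rw [this, zero_add]
    rw [hsum] at hrel'
    have heq : (b (k+1) : ℤ) - b k = ν (k+1) 0 * (p:ℤ) ^ (∑ t ∈ Finset.Icc 1 k, n t) := by
      push_cast [hrel']; ring
    rw [heq]
    exact Dvd.dvd.mul_left dvd_rfl _
end

section
/- Let p be a prime, h ≥ 2, n_1,…,n_{h-1} positive integers, b_1 < … < b_{h-1} positive integers coprime to p, and m̄_j = p^{n_{j+1}+…+n_{h-1}} b_j, d = p^{n_1+…+n_{h-1}}. Then the map (ℓ_0, ℓ_1, …, ℓ_{h-1}) ↦ ℓ_0·d + ℓ_1·m̄_1 + … + ℓ_{h-1}·m̄_{h-1}, defined on tuples with ℓ_0 ≥ 0 and 0 ≤ ℓ_j < p^{n_j} for j ≥ 1, is injective. -/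
private lemma weier_aux (p : ℕ) (hp : p.Prime) :
    ∀ m : ℕ, ∀ n b ℓ ℓ' : ℕ → ℕ,
      (∀ j, 1 ≤ j → j ≤ m → Nat.Coprime (b j) p) →
      (∀ j, 1 ≤ j → j ≤ m → ℓ j < p ^ n j) →
      (∀ j, 1 ≤ j → j ≤ m → ℓ' j < p ^ n j) →
      ℓ 0 * p ^ (∑ t ∈ Finset.Icc 1 m, n t)
          + ∑ j ∈ Finset.Icc 1 m, ℓ j * (p ^ (∑ t ∈ Finset.Icc (j + 1) m, n t) * b j)
        = ℓ' 0 * p ^ (∑ t ∈ Finset.Icc 1 m, n t)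
          + ∑ j ∈ Finset.Icc 1 m, ℓ' j * (p ^ (∑ t ∈ Finset.Icc (j + 1) m, n t) * b j) →
      ∀ j, j ≤ m → ℓ j = ℓ' j := by
  intro m
  induction m with
  | zero =>
    intro n b ℓ ℓ' _ _ _ heq j hj
    interval_cases j
    simpa using heq
  | succ m ih =>
    intro n b ℓ ℓ' hcop hl hl' heq j hj
    set N := n (m + 1) with hN
    -- rewrite each side to the form p^N * X + top
    have L : ∀ ℓ : ℕ → ℕ,
        ℓ 0 * p ^ (∑ t ∈ Finset.Icc 1 (m + 1), n t)
          + ∑ j ∈ Finset.Icc 1 (m + 1),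
              ℓ j * (p ^ (∑ t ∈ Finset.Icc (j + 1) (m + 1), n t) * b j)
        = p ^ N * (ℓ 0 * p ^ (∑ t ∈ Finset.Icc 1 m, n t)
            + ∑ j ∈ Finset.Icc 1 m, ℓ j * (p ^ (∑ t ∈ Finset.Icc (j + 1) m, n t) * b j))
          + ℓ (m + 1) * b (m + 1) := by
      intro ℓ
      rw [Finset.sum_Icc_succ_top (by omega : 1 ≤ m + 1) n,
        Finset.sum_Icc_succ_top (by omega : 1 ≤ m + 1)
          (fun j => ℓ j * (p ^ (∑ t ∈ Finset.Icc (j + 1) (m + 1), n t) * b j))]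
      have hempty : Finset.Icc (m + 1 + 1) (m + 1) = ∅ := Finset.Icc_eq_empty (by omega)
      have hsum : ∑ j ∈ Finset.Icc 1 m,
          ℓ j * (p ^ (∑ t ∈ Finset.Icc (j + 1) (m + 1), n t) * b j)
          = p ^ N * ∑ j ∈ Finset.Icc 1 m,
              ℓ j * (p ^ (∑ t ∈ Finset.Icc (j + 1) m, n t) * b j) := by
        rw [Finset.mul_sum]
        refine Finset.sum_congr rfl fun j hj => ?_
        have hj' : j ≤ m := (Finset.mem_Icc.mp hj).2
        rw [Finset.sum_Icc_succ_top (by omega : j + 1 ≤ m + 1) n, pow_add]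
        ring
      rw [hsum, hempty]
      simp [pow_add]
      ring
    set X := ℓ 0 * p ^ (∑ t ∈ Finset.Icc 1 m, n t)
        + ∑ j ∈ Finset.Icc 1 m, ℓ j * (p ^ (∑ t ∈ Finset.Icc (j + 1) m, n t) * b j) with hX
    set X' := ℓ' 0 * p ^ (∑ t ∈ Finset.Icc 1 m, n t)
        + ∑ j ∈ Finset.Icc 1 m, ℓ' j * (p ^ (∑ t ∈ Finset.Icc (j + 1) m, n t) * b j) with hX'
    have heq' : p ^ N * X + ℓ (m + 1) * b (m + 1)
        = p ^ N * X' + ℓ' (m + 1) * b (m + 1) := by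
      rw [← L ℓ, ← L ℓ']; exact heq
    have hmod : ℓ (m + 1) * b (m + 1) % p ^ N = ℓ' (m + 1) * b (m + 1) % p ^ N := by
      calc ℓ (m + 1) * b (m + 1) % p ^ N
          = (p ^ N * X + ℓ (m + 1) * b (m + 1)) % p ^ N := (Nat.mul_add_mod _ _ _).symm
        _ = (p ^ N * X' + ℓ' (m + 1) * b (m + 1)) % p ^ N := by rw [heq']
        _ = ℓ' (m + 1) * b (m + 1) % p ^ N := Nat.mul_add_mod _ _ _
    have hcop' : Nat.Coprime (b (m + 1)) (p ^ N) :=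
      (hcop (m + 1) (by omega) le_rfl).pow_right N
    have hdig : ℓ (m + 1) = ℓ' (m + 1) := by
      have h2 : ℓ (m + 1) ≡ ℓ' (m + 1) [MOD p ^ N] :=
        (Nat.ModEq.cancel_right_of_coprime hcop'.symm hmod)
      have : ℓ (m + 1) % p ^ N = ℓ' (m + 1) % p ^ N := h2
      rwa [Nat.mod_eq_of_lt (hl (m + 1) (by omega) le_rfl),
        Nat.mod_eq_of_lt (hl' (m + 1) (by omega) le_rfl)] at this
    have heqX : X = X' := by
      rw [hdig] at heq'
      have := Nat.add_right_cancel heq'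
      exact Nat.eq_of_mul_eq_mul_left (pow_pos hp.pos N) this
    rcases Nat.lt_or_ge j (m + 1) with hlt | hge
    · exact ih n b ℓ ℓ' (fun k h1 h2 => hcop k h1 (by omega))
        (fun k h1 h2 => hl k h1 (by omega)) (fun k h1 h2 => hl' k h1 (by omega))
        heqX j (by omega)
    · have : j = m + 1 := by omega
      rw [this]; exact hdig

theorem weierstrass_semigroup_digits_injective (p h : ℕ) (hp : p.Prime) (hh : 2 ≤ h)
    (n b : ℕ → ℕ)
    (hn : ∀ j, 1 ≤ j → j ≤ h - 1 → 0 < n j)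
    (hb : ∀ j, 1 ≤ j → j ≤ h - 1 → 0 < b j)
    (hmono : ∀ i j, 1 ≤ i → i < j → j ≤ h - 1 → b i < b j)
    (hcop : ∀ j, 1 ≤ j → j ≤ h - 1 → Nat.Coprime (b j) p) :
    ∀ ℓ ℓ' : ℕ → ℕ,
      (∀ j, 1 ≤ j → j ≤ h - 1 → ℓ j < p ^ n j) →
      (∀ j, 1 ≤ j → j ≤ h - 1 → ℓ' j < p ^ n j) →
      ℓ 0 * p ^ (∑ t ∈ Finset.Icc 1 (h - 1), n t)
          + ∑ j ∈ Finset.Icc 1 (h - 1),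
              ℓ j * (p ^ (∑ t ∈ Finset.Icc (j + 1) (h - 1), n t) * b j)
        = ℓ' 0 * p ^ (∑ t ∈ Finset.Icc 1 (h - 1), n t)
          + ∑ j ∈ Finset.Icc 1 (h - 1),
              ℓ' j * (p ^ (∑ t ∈ Finset.Icc (j + 1) (h - 1), n t) * b j) →
      ∀ j, j ≤ h - 1 → ℓ j = ℓ' j := by
  intro ℓ ℓ' hl hl' heq j hj
  exact weier_aux p hp (h - 1) n b ℓ ℓ' hcop hl hl' heq j hj
end
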